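/- arXiv:1806.03403 — 4 statements merged into one kernel-verified Lean document; each statement's English description precedes it below -/
import Mathlib

section
/- For any admissible linear functional on a convex polytope P, every nonempty face F of P has a unique source and a unique sink in the induced orientation of the graph of P restricted to F. -/
/-!
Let `T` be the vertex set of the face `F`; it is finite and convexly independent. The vertex `v₀`
of `T` maximising `f` is a sink, admissibility making every edge at `v₀` strictly decreasing
towards it. It is the only one: from any other vertex `w` of `F` there is an edge `[w, u]` of `P`
inside `F` with `f w ≤ f u`. To find it, tilt `f` by a functional `ψ` exposing `w` until
`f + t ψ` (with `t ≥ 0`) supports `F` at `w` and at a second vertex. The face of `F` it cuts out is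
again an exposed face of the polytope `P`, so we recurse into it, unless it is all of `F`; then
every vertex of `F` lies `f`-above `w` and any edge at `w` will do, and such an edge is found by
the same descent along a supporting functional whose face is proper. Sources are sinks of `-f`.
-/

/-- `u` and `v` are the endpoints of an edge of the polytope `P`. -/
def IsPolyEdge {m : ℕ} (P : Set (EuclideanSpace ℝ (Fin m)))
    (u v : EuclideanSpace ℝ (Fin m)) : Prop :=
  u ≠ v ∧ u ∈ Set.extremePoints ℝ P ∧ v ∈ Set.extremePoints ℝ P ∧
    IsExposed ℝ P (segment ℝ u v)

open Set

lemma Finset.convexHull_eq_segment_of_card_le_two {V : Type*} [AddCommGroup V] [Module ℝ V]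
    {T : Finset V} (hT : T.card ≤ 2) {v w : V} (hw : w ∈ T) (hv : v ∈ T) (hvw : v ≠ w) :
    convexHull ℝ (T : Set V) = segment ℝ w v := by
  classical
  have hpair : {w, v} = T := Finset.eq_of_subset_of_card_le
    (Finset.insert_subset hw (Finset.singleton_subset_iff.2 hv))
    (by rw [Finset.card_pair hvw.symm]; exact hT)
  rw [← hpair, Finset.coe_pair, convexHull_pair]

lemma Finset.exists_tilt {ι : Type*} [DecidableEq ι] {T : Finset ι} {w v : ι} (g ψ : ι → ℝ)
    (hψ : ∀ u ∈ T, u ≠ w → ψ u < ψ w) (hv : v ∈ T) (hvw : v ≠ w) (hgv : g w ≤ g v) :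
    ∃ t : ℝ, 0 ≤ t ∧ (∀ u ∈ T, g u + t * ψ u ≤ g w + t * ψ w) ∧
      ∃ u ∈ T, u ≠ w ∧ g u + t * ψ u = g w + t * ψ w := by
  have hgap : ∀ u ∈ T.erase w, 0 < ψ w - ψ u := fun u hu =>
    sub_pos.2 (hψ u (Finset.mem_of_mem_erase hu) (Finset.ne_of_mem_erase hu))
  obtain ⟨u₀, hu₀, hmax⟩ := (T.erase w).exists_max_image (fun u => (g u - g w) / (ψ w - ψ u))
    ⟨v, Finset.mem_erase.2 ⟨hvw, hv⟩⟩
  have hv' := Finset.mem_erase.2 ⟨hvw, hv⟩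
  refine ⟨(g u₀ - g w) / (ψ w - ψ u₀),
    (div_nonneg (sub_nonneg.2 hgv) (hgap v hv').le).trans (hmax v hv'), fun u hu => ?_,
    u₀, Finset.mem_of_mem_erase hu₀, Finset.ne_of_mem_erase hu₀, ?_⟩
  · rcases eq_or_ne u w with rfl | huw
    · rfl
    have hu' := Finset.mem_erase.2 ⟨huw, hu⟩
    have := (div_le_iff₀ (hgap u hu')).1 (hmax u hu')
    linarith
  · have := div_mul_cancel₀ (g u₀ - g w) (hgap u₀ hu₀).ne'
    linarith

variable {E : Type*} [NormedAddCommGroup E] [NormedSpace ℝ E]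

namespace ContinuousLinearMap

lemma exists_ge_of_mem_convexHull (l : E →L[ℝ] ℝ) {A : Set E} {x : E}
    (hx : x ∈ convexHull ℝ A) : ∃ a ∈ A, l x ≤ l a :=
  (l.toLinearMap.convexOn convex_univ).exists_ge_of_mem_convexHull (subset_univ _) hx

lemma le_of_mem_convexHull (l : E →L[ℝ] ℝ) {A : Set E} {c : ℝ} (hA : ∀ a ∈ A, l a ≤ c) {x : E}
    (hx : x ∈ convexHull ℝ A) : l x ≤ c :=
  convexHull_min hA (convex_halfSpace_le l.toLinearMap.isLinear c) hx

lemma toExposed_convexHull (l : E →L[ℝ] ℝ) (A : Set E) :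
    l.toExposed (convexHull ℝ A) = convexHull ℝ (l.toExposed A) := by
  refine Subset.antisymm (fun x ⟨hx, hxmax⟩ => ?_) <| convexHull_min
    (fun a ⟨ha, hamax⟩ => ⟨subset_convexHull ℝ A ha, fun y hy => l.le_of_mem_convexHull hamax hy⟩)
    (toExposed.isExposed.convex (convex_convexHull ℝ A))
  obtain ⟨a, ha, hxa⟩ := l.exists_ge_of_mem_convexHull hx
  have ha' : a ∈ l.toExposed A :=
    ⟨ha, fun y hy => (hxmax y (subset_convexHull ℝ A hy)).trans hxa⟩
  have hbelow : A \ l.toExposed A ⊆ {y | l y < l x} := fun y ⟨hy, hyF⟩ =>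
    (hxmax y (subset_convexHull ℝ A hy)).lt_of_ne fun hyx =>
      hyF ⟨hy, fun z hz => hyx ▸ hxmax z (subset_convexHull ℝ A hz)⟩
  have hsub : l.toExposed A ⊆ A := sep_subset A _
  rcases (A \ l.toExposed A).eq_empty_or_nonempty with hA | hA
  · exact convexHull_mono (sdiff_eq_empty.1 hA) hx
  rw [← union_sdiff_cancel hsub, convexHull_union ⟨a, ha'⟩ hA, mem_convexJoin] at hx
  obtain ⟨y, hy, z, hz, p, q, hp, hq, hpq, rfl⟩ := hx
  -- the far endpoint `z` lies strictly below the maximum, so it gets weight zero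
  have hz' : l z < l (p • y + q • z) :=
    convexHull_min hbelow (convex_halfSpace_lt l.toLinearMap.isLinear _) hz
  have hy' : l y ≤ l (p • y + q • z) := hxmax y (convexHull_mono hsub hy)
  simp only [map_add, map_smul, smul_eq_mul] at hz' hy'
  obtain rfl : p = 1 - q := by linarith
  have hzy : l z < l y := by nlinarith
  obtain rfl : q = 0 := le_antisymm (by nlinarith) hq
  simpa using hy

end ContinuousLinearMap

theorem IsExposed.trans_convexHull {S G H : Set E} (hS : S.Finite)
    (hG : IsExposed ℝ (convexHull ℝ S) G) (hH : IsExposed ℝ G H) :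
    IsExposed ℝ (convexHull ℝ S) H := by
  rintro ⟨e, he⟩
  obtain ⟨k, rfl⟩ := hH ⟨e, he⟩
  obtain ⟨g, rfl⟩ := hG ⟨e, he.1⟩
  set P := convexHull ℝ S
  -- tilting `k` by a large multiple of `g` pushes the vertices off `g.toExposed P` below `e`
  obtain ⟨c, hc⟩ : ∃ c, ∀ s ∈ S, g s < g e → k s - k e < c * (g e - g s) := by
    obtain ⟨c, hc⟩ :=
      ((hS.sep fun s => g s < g e).image fun s => (k s - k e) / (g e - g s)).bddAbove
    refine ⟨c + 1, fun s hs hlt => ?_⟩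
    have := (div_le_iff₀ (sub_pos.2 hlt)).1 (hc ⟨s, ⟨hs, hlt⟩, rfl⟩)
    nlinarith
  have hk' : ∀ x, (k + c • g) x = k x + c * g x := fun x => rfl
  have hvert : ∀ s ∈ S, (k + c • g) s ≤ (k + c • g) e ∧
      ((k + c • g) e ≤ (k + c • g) s → s ∈ k.toExposed (g.toExposed P)) := by
    intro s hs
    have hsP := subset_convexHull ℝ S hs
    rcases (he.1.2 s hsP).lt_or_eq with hlt | heq
    · have := hc s hs hlt
      simp only [hk']
      exact ⟨by linarith, fun h => absurd h (by linarith)⟩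
    · have hsG : s ∈ g.toExposed P := ⟨hsP, fun y hy => heq ▸ he.1.2 y hy⟩
      simp only [hk', heq]
      exact ⟨by linarith [he.2 s hsG], fun h => ⟨hsG, fun y hy => (he.2 y hy).trans (by linarith)⟩⟩
  refine ⟨k + c • g, Subset.antisymm (fun x hx => ⟨hx.1.1, fun y hy => ?_⟩) ?_⟩
  · have hgx : g x = g e := le_antisymm (he.1.2 x hx.1.1) (hx.1.2 e he.1.1)
    have hkx : k x = k e := le_antisymm (he.2 x hx.1) (hx.2 e he.1)
    rw [hk' x, hgx, hkx, ← hk']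
    exact (k + c • g).le_of_mem_convexHull (fun s hs => (hvert s hs).1) hy
  · change (k + c • g).toExposed (convexHull ℝ S) ⊆ _
    rw [ContinuousLinearMap.toExposed_convexHull]
    refine convexHull_min (fun s ⟨hs, hsmax⟩ => (hvert s hs).2 ?_)
      (ContinuousLinearMap.toExposed.isExposed.convex
        (ContinuousLinearMap.toExposed.isExposed.convex (convex_convexHull ℝ S)))
    obtain ⟨a, ha, hea⟩ := (k + c • g).exists_ge_of_mem_convexHull he.1.1
    exact hea.trans (hsmax a ha)

theorem ConvexIndependent.exists_forall_lt {T : Set E} (hT : ConvexIndependent ℝ ((↑) : T → E))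
    (hTf : T.Finite) {w : E} (hw : w ∈ T) : ∃ ψ : E →L[ℝ] ℝ, ∀ v ∈ T, v ≠ w → ψ v < ψ w := by
  obtain ⟨ψ, c, hlt, hgt⟩ := geometric_hahn_banach_closed_point (convex_convexHull ℝ (T \ {w}))
    (hTf.sdiff.isClosed_convexHull ℝ) (convexIndependent_set_iff_notMem_convexHull_sdiff.1 hT w hw)
  exact ⟨ψ, fun v hv hvw => (hlt v (subset_convexHull ℝ _ ⟨hv, hvw⟩)).trans hgt⟩

lemma IsExposed.finite_extremePoints {S F : Set E} (hS : S.Finite)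
    (hF : IsExposed ℝ (convexHull ℝ S) F) : (F.extremePoints ℝ).Finite :=
  hS.subset (hF.isExtreme.extremePoints_subset_extremePoints.trans extremePoints_convexHull_subset)

lemma IsExposed.convexHull_extremePoints_eq {S F : Set E} (hS : S.Finite)
    (hF : IsExposed ℝ (convexHull ℝ S) F) : convexHull ℝ (F.extremePoints ℝ) = F := by
  rw [← ((hF.finite_extremePoints hS).isClosed_convexHull ℝ).closure_eq]
  exact closure_convexHull_extremePoints (hF.isCompact (hS.isCompact_convexHull ℝ))
    (hF.convex (convex_convexHull ℝ S))

lemma isExposed_convexHull_filter {S T : Finset E}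
    (hT : IsExposed ℝ (convexHull ℝ (S : Set E)) (convexHull ℝ (T : Set E))) (h : E →L[ℝ] ℝ) {w : E}
    (hmax : ∀ u ∈ T, h u ≤ h w) (hw : w ∈ T) :
    IsExposed ℝ (convexHull ℝ (S : Set E)) (convexHull ℝ (T.filter (h · = h w) : Set E)) := by
  have hface : (↑(T.filter (h · = h w)) : Set E) = h.toExposed ↑T := by
    ext u
    simp only [Finset.coe_filter, mem_ofPred_eq, ContinuousLinearMap.toExposed, Finset.mem_coe]
    exact and_congr_right fun hu =>
      ⟨fun huw v hv => huw ▸ hmax v hv, fun hum => le_antisymm (hmax u hu) (hum w hw)⟩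
  rw [hface, ← ContinuousLinearMap.toExposed_convexHull]
  exact hT.trans_convexHull S.finite_toSet ContinuousLinearMap.toExposed.isExposed

lemma exists_supporting_functional {T : Finset E}
    (hT : ConvexIndependent ℝ ((↑) : ↥(T : Set E) → E)) (hcard : 2 < T.card) {w : E} (hw : w ∈ T) :
    ∃ h : E →L[ℝ] ℝ, (∀ u ∈ T, h u ≤ h w) ∧ (∃ v ∈ T, v ≠ w ∧ h v = h w) ∧
      ∃ u ∈ T, h u ≠ h w := by
  classical
  obtain ⟨ψ, hψ⟩ := hT.exists_forall_lt T.finite_toSet hw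
  have hR : 1 < (T.erase w).card := by rw [Finset.card_erase_of_mem hw]; omega
  obtain ⟨v₁, hv₁, hv₁max⟩ := (T.erase w).exists_max_image ψ (Finset.card_pos.1 (by omega))
  obtain ⟨χ, hχ⟩ := hT.exists_forall_lt T.finite_toSet (Finset.mem_of_mem_erase hv₁)
  obtain ⟨t, ht, hle, v, hv, hvw, heq⟩ := Finset.exists_tilt χ ψ hψ (Finset.mem_of_mem_erase hv₁)
    (Finset.ne_of_mem_erase hv₁) (hχ w hw (Finset.ne_of_mem_erase hv₁).symm).le
  have happ : ∀ x : E, (χ + t • ψ) x = χ x + t * ψ x := fun x => rfl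
  refine ⟨χ + t • ψ, fun u hu => by simpa only [happ] using hle u hu,
    ⟨v, hv, hvw, by simpa only [happ] using heq⟩, ?_⟩
  -- `v₁` maximises both `χ` and `ψ` on `T \ {w}`, so no other vertex there is on the hyperplane
  obtain ⟨v₂, hv₂, hv₂₁⟩ := Finset.exists_mem_ne hR v₁
  by_contra! hall
  have h₁ := hall v₁ (Finset.mem_of_mem_erase hv₁)
  have h₂ := hall v₂ (Finset.mem_of_mem_erase hv₂)
  have hχ₂ := hχ v₂ (Finset.mem_of_mem_erase hv₂) hv₂₁
  have hψ₂ := hv₁max v₂ hv₂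
  simp only [happ] at h₁ h₂
  nlinarith

theorem exists_isExposed_segment_of_le {S : Finset E} (f : E →L[ℝ] ℝ) (T : Finset E)
    (hT : ConvexIndependent ℝ ((↑) : ↥(T : Set E) → E))
    (hTS : IsExposed ℝ (convexHull ℝ (S : Set E)) (convexHull ℝ (T : Set E))) {w v : E}
    (hw : w ∈ T) (hv : v ∈ T) (hvw : v ≠ w) (hf : f w ≤ f v) :
    ∃ u ∈ T, u ≠ w ∧ f w ≤ f u ∧ IsExposed ℝ (convexHull ℝ (S : Set E)) (segment ℝ w u) := by
  induction T using Finset.strongInduction generalizing f v with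
  | H T ih =>
  classical
  by_cases hcard : T.card ≤ 2
  · exact ⟨v, hv, hvw, hf, Finset.convexHull_eq_segment_of_card_le_two hcard hw hv hvw ▸ hTS⟩
  have descend : ∀ h : E →L[ℝ] ℝ, (∀ u ∈ T, h u ≤ h w) → (∃ v ∈ T, v ≠ w ∧ h v = h w) →
      (∃ u ∈ T, h u ≠ h w) →
      ∃ u ∈ T, u ≠ w ∧ h u = h w ∧ IsExposed ℝ (convexHull ℝ (S : Set E)) (segment ℝ w u) := by
    rintro h hmax ⟨v', hv', hv'w, hv'eq⟩ hproper
    obtain ⟨u, hu, huw, -, hseg⟩ := ih _ (Finset.filter_ssubset.2 hproper) h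
      (hT.mono (Finset.coe_subset.2 (Finset.filter_subset _ T)))
      (isExposed_convexHull_filter hTS h hmax hw)
      (Finset.mem_filter.2 ⟨hw, rfl⟩) (Finset.mem_filter.2 ⟨hv', hv'eq⟩) hv'w hv'eq.ge
    exact ⟨u, (Finset.mem_filter.1 hu).1, huw, (Finset.mem_filter.1 hu).2, hseg⟩
  obtain ⟨ψ, hψ⟩ := hT.exists_forall_lt T.finite_toSet hw
  obtain ⟨t, ht, hle, v', hv', hv'w, heq⟩ := Finset.exists_tilt f ψ hψ hv hvw hf
  have happ : ∀ x : E, (f + t • ψ) x = f x + t * ψ x := fun x => rfl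
  have hup : ∀ u ∈ T, (f + t • ψ) u = (f + t • ψ) w → f w ≤ f u := by
    intro u hu hequ
    rcases eq_or_ne u w with rfl | huw
    · rfl
    rw [happ, happ] at hequ
    nlinarith [hψ u hu huw]
  by_cases hproper : ∃ u ∈ T, (f + t • ψ) u ≠ (f + t • ψ) w
  · obtain ⟨u, hu, huw, hequ, hseg⟩ := descend _ (by simpa only [happ] using hle)
      ⟨v', hv', hv'w, by simpa only [happ] using heq⟩ hproper
    exact ⟨u, hu, huw, hup u hu hequ, hseg⟩
  -- `T` lies on the tilted hyperplane, so every edge at `w` is `f`-increasing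
  push Not at hproper
  obtain ⟨h, hmax, hedge, hne⟩ := exists_supporting_functional hT (by omega) hw
  obtain ⟨u, hu, huw, -, hseg⟩ := descend h hmax hedge hne
  exact ⟨u, hu, huw, hup u hu (hproper u hu), hseg⟩

theorem existsUnique_sink {m : ℕ} (S : Finset (EuclideanSpace ℝ (Fin m)))
    (P : Set (EuclideanSpace ℝ (Fin m)))
    (hP : P = convexHull ℝ (S : Set (EuclideanSpace ℝ (Fin m))))
    (f : EuclideanSpace ℝ (Fin m) →L[ℝ] ℝ)
    (hadm : ∀ u v, IsPolyEdge P u v → f u ≠ f v)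
    (F : Set (EuclideanSpace ℝ (Fin m))) (hF : IsExposed ℝ P F) (hFne : F.Nonempty) :
    ∃! v, v ∈ P.extremePoints ℝ ∧ v ∈ F ∧ ∀ u, IsPolyEdge P v u → u ∈ F → f u < f v := by
  subst hP
  have hfin := hF.finite_extremePoints S.finite_toSet
  set T := hfin.toFinset
  have hTF : convexHull ℝ (T : Set (EuclideanSpace ℝ (Fin m))) = F := by
    rw [hfin.coe_toFinset, hF.convexHull_extremePoints_eq S.finite_toSet]
  have hTP : ∀ v ∈ T, v ∈ (convexHull ℝ (S : Set (EuclideanSpace ℝ (Fin m)))).extremePoints ℝ :=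
    fun v hv => hF.isExtreme.extremePoints_subset_extremePoints (hfin.mem_toFinset.1 hv)
  have hTne : T.Nonempty := by
    rw [← Finset.coe_nonempty, ← convexHull_nonempty_iff (𝕜 := ℝ), hTF]
    exact hFne
  obtain ⟨v₀, hv₀, hmax⟩ := T.exists_max_image f hTne
  have hmaxF : ∀ u ∈ F, f u ≤ f v₀ := fun u hu => f.le_of_mem_convexHull hmax (hTF ▸ hu)
  refine ⟨v₀, ⟨hTP v₀ hv₀, hTF ▸ subset_convexHull ℝ _ hv₀,
    fun u huv hu => (hmaxF u hu).lt_of_ne (hadm _ _ huv).symm⟩, ?_⟩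
  rintro w ⟨hwP, hwF, hsink⟩
  by_contra hwv₀
  have hwT : w ∈ T := hfin.mem_toFinset.2
    (inter_extremePoints_subset_extremePoints_of_subset hF.subset ⟨hwF, hwP⟩)
  obtain ⟨u, hu, huw, hfu, hseg⟩ := exists_isExposed_segment_of_le f T
    (hfin.coe_toFinset ▸ (hF.convex (convex_convexHull ℝ _)).convexIndependent_extremePoints)
    (hTF ▸ hF) hwT hv₀ (Ne.symm hwv₀) (hmax w hwT)
  exact (hsink u ⟨huw.symm, hwP, hTP u hu, hseg⟩ (hTF ▸ subset_convexHull ℝ _ hu)).not_ge hfu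

/-- For any admissible linear functional `f` on a convex polytope `P` and every nonempty
(exposed) face `F` of `P`, the orientation induced by `f` restricted to `F` has a unique
source and a unique sink. -/
theorem stmt_1 {m : ℕ} (S : Finset (EuclideanSpace ℝ (Fin m)))
    (P : Set (EuclideanSpace ℝ (Fin m)))
    (hP : P = convexHull ℝ (S : Set (EuclideanSpace ℝ (Fin m))))
    (f : EuclideanSpace ℝ (Fin m) →L[ℝ] ℝ)
    (hadm : ∀ u v, IsPolyEdge P u v → f u ≠ f v)
    (F : Set (EuclideanSpace ℝ (Fin m))) (hF : IsExposed ℝ P F) (hFne : F.Nonempty) :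
    (∃! v, v ∈ Set.extremePoints ℝ P ∧ v ∈ F ∧
        ∀ u, IsPolyEdge P v u → u ∈ F → f v < f u) ∧
    (∃! v, v ∈ Set.extremePoints ℝ P ∧ v ∈ F ∧
        ∀ u, IsPolyEdge P v u → u ∈ F → f u < f v) :=
  ⟨by simpa using existsUnique_sink S P hP (-f) (by simpa using hadm) F hF hFne,
    existsUnique_sink S P hP f hadm F hF hFne⟩
end

section
/- Assuming the Holt–Klee result Δ_sm(3,7) = 3 and the facet-source lemma (a neighbor v of the global source of an admissible orientation of a simple polytope is the source of some facet not containing the global source), every admissible orientation of a simple 4-polytope with 8 facets in which the source lies on facets {1,2,3,4} and the sink on facets {5,6,7,8} admits a directed path of length at most 4 from source to sink. Hence Δ_sm(4,8) = 4. -/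
/-- There is a directed path of length `n` from `u` to `v` in the digraph `r`. -/
def DPath {V : Type*} (r : V → V → Prop) (u v : V) (n : ℕ) : Prop :=
  ∃ p : ℕ → V, p 0 = u ∧ p n = v ∧ ∀ i < n, r (p i) (p (i + 1))

/-- The strict monotone 4-step theorem (Lemma 5.4), in the combinatorial model of a simple
4-polytope with 8 facets (vertices = 4-subsets of facets, adjacency = sharing 3 facets).
Assuming the facet-source lemma (every out-neighbor of the global source `s` is the source
of some facet not containing `s`) and the Holt–Klee bound Δ_sm(3,7) = 3 (from the source
of a facet to its sink there is a monotone path of length ≤ 3 within the facet), every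
admissible orientation with source `s = [1,2,3,4]` and sink `t = [5,6,7,8]` has a directed
path of length at most 4 from `s` to `t`. -/
theorem stmt_13
    (vertices : Finset (Finset (Fin 8)))
    (hcard : ∀ v ∈ vertices, v.card = 4)
    (r : Finset (Fin 8) → Finset (Fin 8) → Prop)
    (hr : ∀ u v, r u v → u ∈ vertices ∧ v ∈ vertices ∧ (u ∩ v).card = 3)
    (s t : Finset (Fin 8))
    (hs : s = {0, 1, 2, 3}) (ht : t = {4, 5, 6, 7})
    (hsv : s ∈ vertices) (htv : t ∈ vertices)
    (hacyc : ∀ v, ¬ Relation.TransGen r v v)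
    (hsource : ∀ v ∈ vertices, (s ∩ v).card = 3 → r s v)
    (hsink : ∀ v ∈ vertices, (t ∩ v).card = 3 → r v t)
    (hneighbor : ∃ v ∈ vertices, (s ∩ v).card = 3)
    (hfacetSource : ∀ v ∈ vertices, r s v →
      ∃ F : Fin 8, F ∉ s ∧ F ∈ v ∧
        ∀ u ∈ vertices, F ∈ u → (v ∩ u).card = 3 → r v u)
    (hHK37 : ∀ F : Fin 8, ∀ v ∈ vertices, ∀ w ∈ vertices, F ∈ v → F ∈ w →
      (∀ u ∈ vertices, F ∈ u → (v ∩ u).card = 3 → r v u) →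
      (∀ u ∈ vertices, F ∈ u → (u ∩ w).card = 3 → r u w) →
      ∃ k ≤ 3, DPath (fun a b => r a b ∧ F ∈ a ∧ F ∈ b) v w k) :
    ∃ k ≤ 4, DPath r s t k := by
  obtain ⟨v, hv, hsv3⟩ := hneighbor
  have hrsv : r s v := hsource v hv hsv3
  obtain ⟨F, hFs, hFv, hvsrc⟩ := hfacetSource v hv hrsv
  have hFt : F ∈ t := by
    have h : ∀ G : Fin 8, G ∉ ({0,1,2,3} : Finset (Fin 8)) → G ∈ ({4,5,6,7} : Finset (Fin 8)) := by decide
    rw [ht]; exact h F (hs ▸ hFs)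
  have htsink : ∀ u ∈ vertices, F ∈ u → (u ∩ t).card = 3 → r u t := by
    intro u hu _ h3
    exact hsink u hu (by rwa [Finset.inter_comm])
  obtain ⟨k, hk3, p, hp0, hpk, hpr⟩ := hHK37 F v hv t htv hFv hFt hvsrc htsink
  refine ⟨k + 1, by omega, fun i => if i = 0 then s else p (i - 1), by simp, ?_, ?_⟩
  · simp [hpk]
  · intro i hi
    rcases Nat.eq_zero_or_pos i with h | h
    · simp [h, hp0, hrsv]
    · have h1 : i ≠ 0 := h.ne'
      have h2 : i + 1 ≠ 0 := by omega
      simp only [h1, h2, if_neg, if_false]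
      have : i + 1 - 1 = (i - 1) + 1 := by omega
      rw [this]
      exact (hpr (i - 1) (by omega)).1
end

section
/- In a simple d-polytope, if v is a vertex not on facet F but all d neighbors of v lie on facet F, then the polytope is a d-simplex (equivalently, it has d+1 facets). -/
/-- In a simple `d`-polytope (combinatorial model: vertices are `d`-subsets of the `n`
facets, adjacency = sharing `d − 1` facets, every facet contains a vertex, the vertex
graph is connected, and for each vertex `u` and facet `G ∈ u` there is exactly one
neighbor of `u` off `G`): if `v` is a vertex not on facet `F` but all `d` neighbors of `v`
lie on `F`, then the polytope is a `d`-simplex, i.e. it has exactly `d + 1` facets. -/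
theorem stmt_15 {n d : ℕ} (hd : 0 < d)
    (vertices : Finset (Finset (Fin n))) (hne : vertices.Nonempty)
    (hcard : ∀ v ∈ vertices, v.card = d)
    (hused : ∀ F : Fin n, ∃ v ∈ vertices, F ∈ v)
    (hsimple : ∀ u ∈ vertices, ∀ G ∈ u,
      ∃! u', u' ∈ vertices ∧ u ∩ u' = u.erase G)
    (hconn : ∀ u ∈ vertices, ∀ w ∈ vertices,
      ∃ k, DPath (fun a b => a ∈ vertices ∧ b ∈ vertices ∧ (a ∩ b).card = d - 1) u w k)
    (v : Finset (Fin n)) (hv : v ∈ vertices)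
    (F : Fin n) (hF : F ∉ v)
    (hallF : ∀ u ∈ vertices, (v ∩ u).card = d - 1 → F ∈ u) :
    n = d + 1 := by
  classical
  have hvd : v.card = d := hcard v hv
  -- Step 1: the neighbor of v off G is insert F (v.erase G)
  have key : ∀ G ∈ v, insert F (v.erase G) ∈ vertices ∧
      v ∩ insert F (v.erase G) = v.erase G := by
    intro G hG
    obtain ⟨u', ⟨hu'v, hu'cap⟩, _⟩ := hsimple v hv G hG
    have hcap_card : (v ∩ u').card = d - 1 := by
      rw [hu'cap, Finset.card_erase_of_mem hG, hvd]
    have hFu' : F ∈ u' := hallF u' hu'v hcap_card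
    have hsub : v.erase G ⊆ u' := by
      rw [← hu'cap]; exact Finset.inter_subset_right
    have hFe : F ∉ v.erase G := fun h => hF (Finset.mem_of_mem_erase h)
    have hsub2 : insert F (v.erase G) ⊆ u' := Finset.insert_subset hFu' hsub
    have hcards : u'.card ≤ (insert F (v.erase G)).card := by
      rw [Finset.card_insert_of_notMem hFe, Finset.card_erase_of_mem hG, hvd,
        hcard u' hu'v]
      omega
    have heq : insert F (v.erase G) = u' := Finset.eq_of_subset_of_card_le hsub2 hcards
    rw [heq]
    exact ⟨hu'v, hu'cap⟩
  set Q : Finset (Fin n) → Prop :=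
    fun w => w = v ∨ ∃ G ∈ v, w = insert F (v.erase G) with hQ
  -- Step 2: Q is closed under adjacency
  have hclose : ∀ a ∈ vertices, ∀ b ∈ vertices, (a ∩ b).card = d - 1 → Q a → Q b := by
    intro a ha b hb hab hQa
    -- find H with a ∩ b = a.erase H
    have hsub : a ∩ b ⊆ a := Finset.inter_subset_left
    have hcd : (a \ (a ∩ b)).card = 1 := by
      rw [Finset.card_sdiff_of_subset hsub, hab, hcard a ha]; omega
    obtain ⟨H, hH⟩ := Finset.card_eq_one.mp hcd
    have hHa : H ∈ a := by
      have : H ∈ a \ (a ∩ b) := by rw [hH]; exact Finset.mem_singleton_self H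
      exact (Finset.mem_sdiff.mp this).1
    have hcapH : a ∩ b = a.erase H := by
      rw [Finset.erase_eq, ← hH, Finset.sdiff_sdiff_self_left,
        ← Finset.inter_assoc, Finset.inter_self]
    obtain ⟨u', hu'prop, huniq⟩ := hsimple a ha H hHa
    have hb_eq : b = u' := huniq b ⟨hb, hcapH⟩
    rcases hQa with rfl | ⟨G, hG, rfl⟩
    · -- a = v
      have hk := key H hHa
      have : insert F (a.erase H) = u' := huniq _ ⟨hk.1, hk.2⟩
      right
      exact ⟨H, hHa, by rw [hb_eq, ← this]⟩
    · -- a = insert F (v.erase G)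
      rcases Finset.mem_insert.mp hHa with hHF | hHe
      · -- H = F : b = v
        have hcapv : insert F (v.erase G) ∩ v = (insert F (v.erase G)).erase F := by
          ext x
          simp only [Finset.mem_inter, Finset.mem_insert, Finset.mem_erase]
          constructor
          · rintro ⟨hx1, hx2⟩
            rcases hx1 with rfl | hx1
            · exact absurd hx2 hF
            · exact ⟨fun h => hF (h ▸ hx2), Or.inr hx1⟩
          · rintro ⟨hxF, rfl | hx⟩
            · exact absurd rfl hxF
            · exact ⟨Or.inr hx, hx.2⟩
        have : v = u' := huniq v ⟨hv, by rw [hHF]; exact hcapv⟩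
        left; rw [hb_eq, ← this]
      · -- H ∈ v.erase G
        have hHv : H ∈ v := Finset.mem_of_mem_erase hHe
        have hHG : H ≠ G := (Finset.mem_erase.mp hHe).1
        have hHF : H ≠ F := by
          rintro rfl; exact hF hHv
        have hk := key H hHv
        have hcapc : insert F (v.erase G) ∩ insert F (v.erase H) =
            (insert F (v.erase G)).erase H := by
          ext x
          simp only [Finset.mem_inter, Finset.mem_insert, Finset.mem_erase]
          constructor
          · rintro ⟨rfl | ⟨hxG, hxv⟩, hx2⟩
            · exact ⟨Ne.symm hHF, Or.inl rfl⟩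
            · rcases hx2 with rfl | ⟨hxH, _⟩
              · exact ⟨Ne.symm hHF, Or.inl rfl⟩
              · exact ⟨hxH, Or.inr ⟨hxG, hxv⟩⟩
          · rintro ⟨hxH, rfl | ⟨hxG, hxv⟩⟩
            · exact ⟨Or.inl rfl, Or.inl rfl⟩
            · exact ⟨Or.inr ⟨hxG, hxv⟩, Or.inr ⟨hxH, hxv⟩⟩
        have : insert F (v.erase H) = u' := huniq _ ⟨hk.1, hcapc⟩
        right
        exact ⟨H, hHv, by rw [hb_eq, ← this]⟩
  -- Step 3: every vertex satisfies Q
  have hall : ∀ w ∈ vertices, Q w := by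
    intro w hw
    obtain ⟨k, p, hp0, hpk, hstep⟩ := hconn v hv w hw
    have : ∀ i ≤ k, Q (p i) := by
      intro i
      induction i with
      | zero => intro _; left; exact hp0
      | succ j ih =>
        intro hjk
        have hjlt : j < k := Nat.lt_of_succ_le hjk
        obtain ⟨h1, h2, h3⟩ := hstep j hjlt
        exact hclose (p j) h1 (p (j + 1)) h2 h3 (ih (Nat.le_of_lt hjlt))
    have := this k le_rfl
    rwa [hpk] at this
  -- Step 4: every facet is in insert F v
  have huniv : ∀ x : Fin n, x ∈ insert F v := by
    intro x
    obtain ⟨w, hw, hxw⟩ := hused x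
    rcases hall w hw with rfl | ⟨G, hG, rfl⟩
    · exact Finset.mem_insert_of_mem hxw
    · rcases Finset.mem_insert.mp hxw with rfl | hx
      · exact Finset.mem_insert_self _ _
      · exact Finset.mem_insert_of_mem (Finset.mem_of_mem_erase hx)
  have : (insert F v) = Finset.univ := Finset.eq_univ_iff_forall.mpr huniv
  have hc : (insert F v).card = n := by rw [this, Finset.card_univ, Fintype.card_fin]
  rw [Finset.card_insert_of_notMem hF, hvd] at hc
  omega
end

section
/- On a shortest directed (monotone) path v₀, v₁, ..., v_k in the graph of a simple polytope: (1) if v_i lies on a facet F not containing v_{i−1}, then v_{i+1} also lies on F (otherwise v_{i−1}, v_i, v_{i+1} are collinear on an edge, contradicting simplicity); and (2) if v_i does not lie on a facet F containing v_{i−1}, then v_{i+1} does not lie on F (else the path could be shortened). -/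
/-- On a shortest directed (monotone) path `p 0, p 1, ..., p k` in the graph of a simple
polytope (vertices = `d`-subsets of the facets, adjacency = sharing `d − 1` facets, each
edge — i.e. `(d−1)`-set of facets — lying on at most 2 vertices, orientation induced by an
admissible functional `f`): for `0 < i < k` and any facet `F`,
(1) if `p i` lies on `F` but `p (i−1)` does not, then `p (i+1)` lies on `F`; and
(2) if `p (i−1)` lies on `F` but `p i` does not, then `p (i+1)` does not lie on `F`. -/
theorem stmt_16 {n d : ℕ}
    (vertices : Finset (Finset (Fin n)))
    (hcard : ∀ v ∈ vertices, v.card = d)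
    (hedge2 : ∀ e : Finset (Fin n), e.card = d - 1 →
      (vertices.filter fun v => e ⊆ v).card ≤ 2)
    (f : Finset (Fin n) → ℝ)
    (r : Finset (Fin n) → Finset (Fin n) → Prop)
    (hr : ∀ u v, r u v ↔
      u ∈ vertices ∧ v ∈ vertices ∧ (u ∩ v).card = d - 1 ∧ f u < f v)
    (p : ℕ → Finset (Fin n)) (k : ℕ)
    (hpath : ∀ i < k, r (p i) (p (i + 1)))
    (hshort : ∀ m, DPath r (p 0) (p k) m → k ≤ m)
    (i : ℕ) (hi : 0 < i) (hik : i < k) (F : Fin n) :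
    ((F ∈ p i ∧ F ∉ p (i - 1)) → F ∈ p (i + 1)) ∧
    ((F ∈ p (i - 1) ∧ F ∉ p i) → F ∉ p (i + 1)) := by
  have hi1 : i - 1 + 1 = i := Nat.succ_pred_eq_of_pos hi
  have h1 := (hr _ _).mp (hpath (i - 1) (by omega))
  rw [hi1] at h1
  have h2 := (hr _ _).mp (hpath i hik)
  obtain ⟨ha, hb, hab, hfab⟩ := h1
  obtain ⟨-, hc, hbc, hfbc⟩ := h2
  have hca : (p (i - 1)).card = d := hcard _ ha
  have hcb : (p i).card = d := hcard _ hb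
  have hcc : (p (i + 1)).card = d := hcard _ hc
  have lem : ∀ x y : Finset (Fin n), x.card = d → (x ∩ y).card = d - 1 →
      ∀ G ∈ x, G ∉ y → x ∩ y = x.erase G := by
    intro x y hx hxy G hGx hGy
    apply Finset.eq_of_subset_of_card_le
    · exact Finset.subset_erase.mpr ⟨Finset.inter_subset_left, by simp [hGy]⟩
    · rw [Finset.card_erase_of_mem hGx, hx, hxy]
  constructor
  · rintro ⟨hFb, hFa⟩
    by_contra hFc
    have e1 : p i ∩ p (i - 1) = (p i).erase F :=
      lem _ _ hcb (by rwa [Finset.inter_comm]) F hFb hFa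
    have e2 : p i ∩ p (i + 1) = (p i).erase F := lem _ _ hcb hbc F hFb hFc
    have he : ((p i).erase F).card = d - 1 := by
      rw [Finset.card_erase_of_mem hFb, hcb]
    have hsub : ({p (i - 1), p i, p (i + 1)} : Finset (Finset (Fin n))) ⊆
        vertices.filter fun v => (p i).erase F ⊆ v := by
      intro x hx
      simp only [Finset.mem_insert, Finset.mem_singleton] at hx
      rcases hx with h | h | h <;> subst h <;> rw [Finset.mem_filter]
      · exact ⟨ha, e1 ▸ Finset.inter_subset_right⟩
      · exact ⟨hb, Finset.erase_subset _ _⟩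
      · exact ⟨hc, e2 ▸ Finset.inter_subset_right⟩
    have hab' : p (i - 1) ≠ p i := fun h => absurd hfab (by rw [h]; exact lt_irrefl _)
    have hbc' : p i ≠ p (i + 1) := fun h => absurd hfbc (by rw [h]; exact lt_irrefl _)
    have hac' : p (i - 1) ≠ p (i + 1) := fun h =>
      absurd (hfab.trans hfbc) (by rw [h]; exact lt_irrefl _)
    have h3 : ({p (i - 1), p i, p (i + 1)} : Finset (Finset (Fin n))).card = 3 := by
      rw [Finset.card_insert_of_notMem (by simp [hab', hac']),
        Finset.card_insert_of_notMem (by simp [hbc']), Finset.card_singleton]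
    have := hedge2 _ he
    have := Finset.card_le_card hsub
    omega
  · rintro ⟨hFa, hFb⟩ hFc
    have e1 : p (i - 1) ∩ p i = (p (i - 1)).erase F := lem _ _ hca hab F hFa hFb
    have e2 : p (i + 1) ∩ p i = (p (i + 1)).erase F :=
      lem _ _ hcc (by rwa [Finset.inter_comm]) F hFc hFb
    have hd1 : 1 ≤ d := by
      have := Finset.card_pos.mpr ⟨F, hFa⟩
      omega
    have hsub : (p (i - 1)).erase F ∪ (p (i + 1)).erase F ⊆ p i := by
      rw [Finset.union_subset_iff]
      exact ⟨e1 ▸ Finset.inter_subset_right, e2 ▸ Finset.inter_subset_right⟩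
    have hu : ((p (i - 1)).erase F ∪ (p (i + 1)).erase F).card ≤ d :=
      hcb ▸ Finset.card_le_card hsub
    have hint : d - 2 ≤ ((p (i - 1)).erase F ∩ (p (i + 1)).erase F).card := by
      have h4 := Finset.card_inter_add_card_union ((p (i - 1)).erase F) ((p (i + 1)).erase F)
      have h5 : ((p (i - 1)).erase F).card = d - 1 := by
        rw [Finset.card_erase_of_mem hFa, hca]
      have h6 : ((p (i + 1)).erase F).card = d - 1 := by
        rw [Finset.card_erase_of_mem hFc, hcc]
      omega
    have hins : insert F ((p (i - 1)).erase F ∩ (p (i + 1)).erase F) ⊆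
        p (i - 1) ∩ p (i + 1) := by
      rw [Finset.insert_subset_iff]
      exact ⟨Finset.mem_inter.mpr ⟨hFa, hFc⟩,
        Finset.inter_subset_inter (Finset.erase_subset _ _) (Finset.erase_subset _ _)⟩
    have hFnot : F ∉ (p (i - 1)).erase F ∩ (p (i + 1)).erase F := by simp
    have hcard_ac : d - 1 ≤ (p (i - 1) ∩ p (i + 1)).card := by
      have h7 := Finset.card_insert_of_notMem hFnot
      have h8 := Finset.card_le_card hins
      omega
    have hac' : p (i - 1) ≠ p (i + 1) := fun h =>
      absurd (hfab.trans hfbc) (by rw [h]; exact lt_irrefl _)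
    have hlt : (p (i - 1) ∩ p (i + 1)).card < d := by
      by_contra h
      push_neg at h
      have heq : p (i - 1) ∩ p (i + 1) = p (i - 1) :=
        Finset.eq_of_subset_of_card_le Finset.inter_subset_left (by omega)
      have hsb : p (i - 1) ⊆ p (i + 1) := heq ▸ Finset.inter_subset_right
      exact hac' (Finset.eq_of_subset_of_card_le hsb (by rw [hca, hcc]))
    have hrac : r (p (i - 1)) (p (i + 1)) :=
      (hr _ _).mpr ⟨ha, hc, by omega, hfab.trans hfbc⟩
    have hdp : DPath r (p 0) (p k) (k - 1) := by
      refine ⟨fun j => if j < i then p j else p (j + 1), by simp [hi], ?_, ?_⟩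
      · have hni : ¬ (k - 1 < i) := by omega
        simp only [hni, if_false]
        congr 1
        omega
      · intro j hj
        rcases lt_trichotomy (j + 1) i with h | h | h
        · have hji : j < i := by omega
          simp only [if_pos hji, if_pos h]
          exact hpath j (by omega)
        · have hji : j < i := by omega
          have hnj : ¬ (j + 1 < i) := by omega
          simp only [if_pos hji, if_neg hnj]
          have e3 : j + 1 + 1 = i + 1 := by omega
          have e4 : j = i - 1 := by omega
          rw [e3, e4]
          exact hrac
        · have hnj : ¬ (j < i) := by omega
          have hnj' : ¬ (j + 1 < i) := by omega
          simp only [if_neg hnj, if_neg hnj']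
          exact hpath (j + 1) (by omega)
    have := hshort (k - 1) hdp
    omega
end
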